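/- arXiv:2302.01763 — 2 statements merged into one kernel-verified Lean document; each statement's English description precedes it below -/
import Mathlib

section
/- Let n ≥ 1, let Q be a finite set of SNVs, for each k ∈ Q let p̄_k be a real number with 0 < p̄_k < 1/2, and let γ be a real number with 0 < γ < 1/4. Set R^k_t = (1 − p̄_k)^{2t}, A_k = log((1 − R^k_n)/(1 − γ R^k_{n−1})), B_k = log(R^k_n/(γ R^k_{n−1})), and for d : Q → {0,1} and x : Q → {0,1} define L(Q, d, x) = Σ_{k∈Q} d_k ( x_k A_k + (1 − x_k) B_k ). Let Q₁ = { j ∈ Q : x_j = 1 }, and let F, M ⊆ Q₁ be disjoint subsets. Let x^F agree with x except that x^F_j = 0 for j ∈ F. Then L(Q \ M, d, x^F) ≥ L(Q, d, x); i.e., flipping the Beacon responses in F and masking the SNVs in M can only (weakly) increase the LRT score of every individual. -/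
/-- Flipping the Beacon responses in `F` and masking the SNVs in `M`
(both subsets of the 'yes'-response SNVs `Q₁`, disjoint) can only weakly
increase the LRT score of every individual. -/
theorem flip_and_mask_weakly_increase_LRT
    {ι : Type*} [DecidableEq ι] (n : ℕ) (hn : 1 ≤ n)
    (Q : Finset ι) (pbar : ι → ℝ) (hp : ∀ k ∈ Q, 0 < pbar k ∧ pbar k < 1 / 2)
    (γ : ℝ) (hγ0 : 0 < γ) (hγ1 : γ < 1 / 4)
    (R : ι → ℕ → ℝ) (hR : ∀ k, ∀ t : ℕ, R k t = (1 - pbar k) ^ (2 * t))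
    (A B : ι → ℝ)
    (hA : ∀ k, A k = Real.log ((1 - R k n) / (1 - γ * R k (n - 1))))
    (hB : ∀ k, B k = Real.log (R k n / (γ * R k (n - 1))))
    (d x : ι → ℝ)
    (hd : ∀ k ∈ Q, d k = 0 ∨ d k = 1) (hx : ∀ k ∈ Q, x k = 0 ∨ x k = 1)
    (F M : Finset ι)
    (hF : F ⊆ Q.filter (fun j => x j = 1)) (hM : M ⊆ Q.filter (fun j => x j = 1))
    (hFM : Disjoint F M)
    (xF : ι → ℝ) (hxF : ∀ k, xF k = if k ∈ F then 0 else x k) :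
    ∑ k ∈ Q, d k * (x k * A k + (1 - x k) * B k) ≤
      ∑ k ∈ Q \ M, d k * (xF k * A k + (1 - xF k) * B k) := by
  -- Key pointwise facts: A k ≤ 0 ≤ B k for k ∈ Q.
  have key : ∀ k ∈ Q, A k ≤ 0 ∧ 0 ≤ B k := by
    intro k hk
    obtain ⟨hp0, hp2⟩ := hp k hk
    set q : ℝ := 1 - pbar k with hq
    have hq1 : q < 1 := by simp [hq]; linarith
    have hq2 : (1:ℝ)/2 < q := by simp [hq]; linarith
    have hq0 : 0 < q := by linarith
    have hRpos : ∀ t : ℕ, 0 < R k t := by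
      intro t; rw [hR]; positivity
    have hRle1 : ∀ t : ℕ, R k t ≤ 1 := by
      intro t; rw [hR]; exact pow_le_one₀ (le_of_lt hq0) (le_of_lt hq1)
    have hRn : R k n = R k (n-1) * q ^ 2 := by
      rw [hR, hR, ← pow_add]
      congr 1
      omega
    have hγq : γ < q ^ 2 := by
      have h14 : (1:ℝ)/4 < q ^ 2 := by nlinarith
      exact lt_trans hγ1 h14
    have hRnlt1 : R k n < 1 := by
      rw [hR]
      have h2n : 0 < 2 * n := by omega
      exact pow_lt_one₀ (le_of_lt hq0) hq1 (by omega)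
    have hγR : γ * R k (n-1) < R k n := by
      rw [hRn]
      have := hRpos (n-1)
      nlinarith
    have hden : 0 < 1 - γ * R k (n-1) := by
      have h1 : γ * R k (n-1) ≤ γ * 1 := by
        have := hRle1 (n-1); nlinarith
      linarith
    constructor
    · rw [hA]
      apply Real.log_nonpos
      · exact div_nonneg (by linarith) (le_of_lt hden)
      · rw [div_le_one hden]; linarith
    · rw [hB]
      apply Real.log_nonneg
      rw [le_div_iff₀ (mul_pos hγ0 (hRpos _))]
      linarith
  have hMQ : M ⊆ Q := hM.trans (Finset.filter_subset _ _)
  rw [← Finset.sum_sdiff hMQ]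
  have hMsum : ∑ k ∈ M, d k * (x k * A k + (1 - x k) * B k) ≤ 0 := by
    apply Finset.sum_nonpos
    intro k hkM
    have hkQ : k ∈ Q := hMQ hkM
    have hx1 : x k = 1 := (Finset.mem_filter.mp (hM hkM)).2
    have hd01 := hd k hkQ
    have hA0 := (key k hkQ).1
    rw [hx1]
    rcases hd01 with h | h <;> rw [h] <;> ring_nf <;> nlinarith
  have hmain : ∑ k ∈ Q \ M, d k * (x k * A k + (1 - x k) * B k) ≤
      ∑ k ∈ Q \ M, d k * (xF k * A k + (1 - xF k) * B k) := by
    apply Finset.sum_le_sum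
    intro k hk
    have hkQ : k ∈ Q := (Finset.mem_sdiff.mp hk).1
    by_cases hkF : k ∈ F
    · have hx1 : x k = 1 := (Finset.mem_filter.mp (hF hkF)).2
      have hxF0 : xF k = 0 := by rw [hxF]; simp [hkF]
      have hAB : A k ≤ B k := le_trans (key k hkQ).1 (key k hkQ).2
      rw [hx1, hxF0]
      rcases hd k hkQ with h | h <;> rw [h] <;> nlinarith
    · have : xF k = x k := by rw [hxF]; simp [hkF]
      rw [this]
  linarith
end

section
/- Let n ≥ 1, let Q be a finite set of SNVs, for each k ∈ Q let p̄_k be a real number with 0 < p̄_k < 1/2, and let γ be a real number with 0 < γ < 1/4. Set R^k_t = (1 − p̄_k)^{2t}, A_k = log((1 − R^k_n)/(1 − γ R^k_{n−1})), B_k = log(R^k_n/(γ R^k_{n−1})), and for d : Q → {0,1} and x : Q → {0,1} define L(Q, d, x) = Σ_{k∈Q} d_k ( x_k A_k + (1 − x_k) B_k ). Let Q₁ = { j ∈ Q : x_j = 1 }. Then for all disjoint F, M ⊆ Q₁, letting x^F agree with x except x^F_j = 0 for j ∈ F, we have L(Q \ M, d, x^F) ≤ Σ_{j∈Q} d_j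 B_j, and the maximum value Σ_{j∈Q} d_j B_j is attained when F = Q₁ and M = ∅; i.e., the maximum LRT score attainable for an individual via any combination of flipping and masking 'yes'-response SNVs is Σ_j d_j B_j. -/
/-- The maximum LRT score attainable via any combination of flipping a subset `F`
and masking a subset `M` of 'yes'-response SNVs is `∑_{j ∈ Q} d_j B_j`, attained
when `F = Q₁` (all 'yes' responses flipped) and `M = ∅`. -/
theorem max_attainable_LRT_score
    {ι : Type*} [DecidableEq ι] (n : ℕ) (hn : 1 ≤ n)
    (Q : Finset ι) (pbar : ι → ℝ) (hp : ∀ k ∈ Q, 0 < pbar k ∧ pbar k < 1 / 2)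
    (γ : ℝ) (hγ0 : 0 < γ) (hγ1 : γ < 1 / 4)
    (R : ι → ℕ → ℝ) (hR : ∀ k, ∀ t : ℕ, R k t = (1 - pbar k) ^ (2 * t))
    (A B : ι → ℝ)
    (hA : ∀ k, A k = Real.log ((1 - R k n) / (1 - γ * R k (n - 1))))
    (hB : ∀ k, B k = Real.log (R k n / (γ * R k (n - 1))))
    (d x : ι → ℝ)
    (hd : ∀ k ∈ Q, d k = 0 ∨ d k = 1) (hx : ∀ k ∈ Q, x k = 0 ∨ x k = 1) :
    (∀ F M : Finset ι,
        F ⊆ Q.filter (fun j => x j = 1) → M ⊆ Q.filter (fun j => x j = 1) →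
        Disjoint F M →
        ∑ k ∈ Q \ M, d k * ((if k ∈ F then (0 : ℝ) else x k) * A k +
            (1 - if k ∈ F then (0 : ℝ) else x k) * B k) ≤ ∑ j ∈ Q, d j * B j) ∧
    ∑ k ∈ Q \ (∅ : Finset ι),
        d k * ((if k ∈ Q.filter (fun j => x j = 1) then (0 : ℝ) else x k) * A k +
          (1 - if k ∈ Q.filter (fun j => x j = 1) then (0 : ℝ) else x k) * B k) =
      ∑ j ∈ Q, d j * B j := by
  -- key facts: A k ≤ 0 and 0 ≤ B k for k ∈ Q
  have key : ∀ k ∈ Q, A k ≤ 0 ∧ 0 ≤ B k := by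
    intro k hk
    obtain ⟨hp0, hp2⟩ := hp k hk
    have h1p : (1 : ℝ) / 2 < 1 - pbar k := by linarith
    have h1p0 : (0 : ℝ) < 1 - pbar k := by linarith
    have h1p1 : 1 - pbar k < 1 := by linarith
    have hsq : γ < (1 - pbar k) ^ 2 := by nlinarith
    have hRm0 : 0 < R k (n - 1) := by rw [hR]; positivity
    have hRm1 : R k (n - 1) ≤ 1 := by
      rw [hR]; exact pow_le_one₀ (le_of_lt h1p0) (le_of_lt h1p1)
    have hsplit : R k n = R k (n - 1) * (1 - pbar k) ^ 2 := by
      rw [hR, hR]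
      rw [show 2 * n = 2 * (n - 1) + 2 by omega, pow_add]
    have hRn0 : 0 < R k n := by rw [hR]; positivity
    have hRn1 : R k n < 1 := by
      rw [hR]
      exact pow_lt_one₀ (le_of_lt h1p0) h1p1 (by omega)
    constructor
    · rw [hA]
      apply Real.log_nonpos
      · apply div_nonneg (by linarith)
        nlinarith
      · rw [div_le_one (by nlinarith)]
        nlinarith
    · rw [hB]
      apply Real.log_nonneg
      rw [le_div_iff₀ (by positivity)]
      nlinarith
  have hdB : ∀ k ∈ Q, 0 ≤ d k * B k := by
    intro k hk
    rcases hd k hk with h | h <;> rw [h]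
    · simp
    · simpa using (key k hk).2
  constructor
  · intro F M hF hM hFM
    calc ∑ k ∈ Q \ M, d k * ((if k ∈ F then (0 : ℝ) else x k) * A k +
            (1 - if k ∈ F then (0 : ℝ) else x k) * B k)
        ≤ ∑ k ∈ Q \ M, d k * B k := by
          apply Finset.sum_le_sum
          intro k hk
          have hkQ : k ∈ Q := (Finset.sdiff_subset) hk
          obtain ⟨hA0, hB0⟩ := key k hkQ
          have hy : (if k ∈ F then (0 : ℝ) else x k) = 0 ∨
              (if k ∈ F then (0 : ℝ) else x k) = 1 := by
            by_cases h : k ∈ F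
            · simp [h]
            · simp [h]; exact hx k hkQ
          rcases hd k hkQ with h | h <;> rw [h]
          · simp
          · rcases hy with h' | h' <;> rw [h'] <;> ring_nf <;> nlinarith
        _ ≤ ∑ j ∈ Q, d j * B j := by
          apply Finset.sum_le_sum_of_subset_of_nonneg Finset.sdiff_subset
          intro j hj _
          exact hdB j hj
  · rw [Finset.sdiff_empty]
    apply Finset.sum_congr rfl
    intro k hk
    by_cases h : k ∈ Q.filter (fun j => x j = 1)
    · simp [h]
    · have hx0 : x k = 0 := by
        rcases hx k hk with h' | h'
        · exact h'
        · exact absurd (Finset.mem_filter.mpr ⟨hk, h'⟩) h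
      simp [h, hx0]
end
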